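/- Let g ∈ ℝ^{m×n} be fixed, let β₁ ∈ (0,1], and let σ ≥ 0. Let M̃ be a random matrix in ℝ^{m×n}, let G be a random matrix with E[G | M̃] = g and E[‖G − g‖_F² | M̃] ≤ σ² almost surely, and let P ∈ ℝ^{m×r} be any random matrix with Pᵀ P = I_r that is determined by M̃ and G. Then E[‖P Pᵀ ((1 − β₁) M̃ + β₁ G − g)‖_F²] ≤ (1 − β₁) · E[‖M̃ − g‖_F²] + β₁ σ². -/
import Mathlib

open Matrix MeasureTheory

noncomputable def frobSq {a b : ℕ} (A : Matrix (Fin a) (Fin b) ℝ) : ℝ :=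
  ∑ i, ∑ j, (A i j) ^ 2

lemma frobSq_nonneg {a b : ℕ} (A : Matrix (Fin a) (Fin b) ℝ) : 0 ≤ frobSq A := by
  apply Finset.sum_nonneg; intro i _; apply Finset.sum_nonneg; intro j _; positivity

lemma frobSq_eq_trace {a b : ℕ} (A : Matrix (Fin a) (Fin b) ℝ) :
    frobSq A = Matrix.trace (Aᵀ * A) := by
  simp [frobSq, Matrix.trace, Matrix.diag, Matrix.mul_apply, sq]
  exact Finset.sum_comm

lemma proj_frob {a b : ℕ} (Q : Matrix (Fin a) (Fin a) ℝ) (hQsymm : Qᵀ = Q)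
    (hQidem : Q * Q = Q) (A : Matrix (Fin a) (Fin b) ℝ) :
    frobSq (Q * A) ≤ frobSq A := by
  have hQQ : ∀ B : Matrix (Fin a) (Fin b) ℝ, Q * (Q * B) = Q * B := fun B => by
    rw [← Matrix.mul_assoc, hQidem]
  have h0 : (1 - Q) * A = A - Q * A := by rw [Matrix.sub_mul, Matrix.one_mul]
  have h1 : Q * ((1 - Q) * A) = 0 := by
    rw [h0, Matrix.mul_sub, hQQ, sub_self]
  have h2 : (1 - Q) * ((1 - Q) * A) = (1 - Q) * A := by
    rw [Matrix.sub_mul ((1:Matrix (Fin a) (Fin a) ℝ)) Q ((1 - Q) * A), Matrix.one_mul, h1,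
      sub_zero]
  have e1 : frobSq (Q * A) = Matrix.trace (Aᵀ * (Q * A)) := by
    rw [frobSq_eq_trace, Matrix.transpose_mul, hQsymm, Matrix.mul_assoc, hQQ]
  have e2 : frobSq ((1 - Q) * A)
      = Matrix.trace (Aᵀ * A) - Matrix.trace (Aᵀ * (Q * A)) := by
    rw [frobSq_eq_trace, Matrix.transpose_mul, Matrix.transpose_sub, Matrix.transpose_one,
      hQsymm, Matrix.mul_assoc, h2, h0, Matrix.mul_sub, Matrix.trace_sub]
  have := frobSq_nonneg ((1 - Q) * A)
  rw [frobSq_eq_trace A]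
  linarith

lemma proj_le {a b c : ℕ} (P : Matrix (Fin a) (Fin c) ℝ) (hP : Pᵀ * P = 1)
    (A : Matrix (Fin a) (Fin b) ℝ) : frobSq (P * Pᵀ * A) ≤ frobSq A := by
  apply proj_frob
  · rw [Matrix.transpose_mul, Matrix.transpose_transpose]
  · rw [Matrix.mul_assoc, ← Matrix.mul_assoc Pᵀ, hP, Matrix.one_mul]

lemma convex_bound {a b : ℕ} (β : ℝ) (hβ0 : 0 ≤ β) (hβ1 : β ≤ 1)
    (X Y : Matrix (Fin a) (Fin b) ℝ) :
    frobSq ((1 - β) • X + β • Y) ≤ (1 - β) * frobSq X + β * frobSq Y := by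
  unfold frobSq
  rw [Finset.mul_sum, Finset.mul_sum, ← Finset.sum_add_distrib]
  apply Finset.sum_le_sum; intro i _
  rw [Finset.mul_sum, Finset.mul_sum, ← Finset.sum_add_distrib]
  apply Finset.sum_le_sum; intro j _
  simp only [Matrix.add_apply, Matrix.smul_apply, smul_eq_mul]
  nlinarith [sq_nonneg (X i j - Y i j), mul_nonneg hβ0 (sub_nonneg.2 hβ1)]
lemma comap_matrix_le {Ω : Type} {m0 : MeasurableSpace Ω} {a b : ℕ}
    (Mt : Ω → Matrix (Fin a) (Fin b) ℝ)
    (hMmeas : ∀ i j, Measurable[m0] fun ω => Mt ω i j) :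
    MeasurableSpace.comap
      (fun ω => fun i j => Mt ω i j : Ω → Fin a → Fin b → ℝ) inferInstance ≤ m0 := by
  apply Measurable.comap_le
  rw [measurable_pi_iff]
  intro i
  rw [measurable_pi_iff]
  intro j
  exact hMmeas i j

lemma tower_bound {Ω : Type} {m0 : MeasurableSpace Ω} {a b : ℕ}
    (μ : @MeasureTheory.Measure Ω m0) [IsProbabilityMeasure μ]
    (Mt : Ω → Matrix (Fin a) (Fin b) ℝ)
    (hMmeas : ∀ i j, Measurable[m0] fun ω => Mt ω i j)
    (mM : MeasurableSpace Ω)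
    (hmM : mM = MeasurableSpace.comap
      (fun ω => fun i j => Mt ω i j : Ω → Fin a → Fin b → ℝ) inferInstance)
    (f : Ω → ℝ) (hf : Integrable f μ) (c : ℝ)
    (hcv : ∀ᵐ ω ∂μ, (μ[f | mM]) ω ≤ c) :
    ∫ ω, f ω ∂μ ≤ c := by
  have hm : mM ≤ m0 := by
    rw [hmM]
    exact comap_matrix_le Mt hMmeas
  haveI : SigmaFinite (μ.trim hm) := by
    have : IsFiniteMeasure (μ.trim hm) := isFiniteMeasure_trim hm
    infer_instance
  have htower : ∫ ω, (μ[f | mM]) ω ∂μ = ∫ ω, f ω ∂μ := integral_condExp (μ := μ) (f := f) hm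
  rw [← htower]
  calc ∫ ω, (μ[f | mM]) ω ∂μ
      ≤ ∫ _ω, c ∂μ := integral_mono_ae integrable_condExp (integrable_const _) hcv
    _ = c := by simp


/-- Let `g ∈ ℝ^{m×n}` be fixed, `β₁ ∈ (0,1]`, `σ ≥ 0`.  Let `M̃` be a random
matrix, `G` a random matrix with `E[G | M̃] = g` and `E[‖G − g‖_F² | M̃] ≤ σ²` a.s., and let
`P ∈ ℝ^{m×r}` be any random matrix with orthonormal columns that is determined by (measurable
with respect to) `M̃` and `G`.  Then
`E[‖P Pᵀ ((1 − β₁) M̃ + β₁ G − g)‖_F²] ≤ (1 − β₁) E[‖M̃ − g‖_F²] + β₁ σ²`. -/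
theorem stmt6 {m n r : ℕ}
    (g : Matrix (Fin m) (Fin n) ℝ) (β₁ σ : ℝ)
    (hβ₁pos : 0 < β₁) (hβ₁le : β₁ ≤ 1) (hσ : 0 ≤ σ)
    {Ω : Type} [MeasurableSpace Ω] (μ : MeasureTheory.Measure Ω) [IsProbabilityMeasure μ]
    (Mt G : Ω → Matrix (Fin m) (Fin n) ℝ)
    (P : Ω → Matrix (Fin m) (Fin r) ℝ)
    -- measurability of the random matrices
    (hMmeas : ∀ i j, Measurable fun ω => Mt ω i j)
    (hGmeas : ∀ i j, Measurable fun ω => G ω i j)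
    (hG1 : ∀ i j, Integrable (fun ω => G ω i j) μ)
    (hMint : Integrable (fun ω => frobSq (Mt ω - g)) μ)
    (hGint : Integrable (fun ω => frobSq (G ω - g)) μ)
    -- `mM` is the σ-algebra generated by `M̃`
    (mM : MeasurableSpace Ω)
    (hmM : mM = MeasurableSpace.comap
      (fun ω => fun i j => Mt ω i j : Ω → Fin m → Fin n → ℝ) inferInstance)
    -- `mMG` is the σ-algebra generated by `(M̃, G)`
    (mMG : MeasurableSpace Ω)
    (hmMG : mMG = MeasurableSpace.comap
      (fun ω => ((fun i j => Mt ω i j), (fun i j => G ω i j)) :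
        Ω → (Fin m → Fin n → ℝ) × (Fin m → Fin n → ℝ)) inferInstance)
    -- `E[G | M̃] = g`
    (hcond_mean : ∀ i j, μ[(fun ω => G ω i j) | mM] =ᵐ[μ] fun _ => g i j)
    -- `E[‖G − g‖_F² | M̃] ≤ σ²` almost surely
    (hcond_var : ∀ᵐ ω ∂μ, (μ[(fun ω' => frobSq (G ω' - g)) | mM]) ω ≤ σ ^ 2)
    -- `P` has orthonormal columns
    (hPorth : ∀ ω, (P ω)ᵀ * P ω = 1)
    -- `P` is determined by `M̃` and `G`
    (hPdet : ∀ i c, Measurable[mMG] fun ω => P ω i c) :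
    ∫ ω, frobSq (P ω * (P ω)ᵀ * ((1 - β₁) • Mt ω + β₁ • G ω - g)) ∂μ
      ≤ (1 - β₁) * ∫ ω, frobSq (Mt ω - g) ∂μ + β₁ * σ ^ 2 := by
  -- rewrite the argument as a convex combination
  have hrw : ∀ ω, (1 - β₁) • Mt ω + β₁ • G ω - g
      = (1 - β₁) • (Mt ω - g) + β₁ • (G ω - g) := by
    intro ω; ext i j
    simp [Matrix.sub_apply, Matrix.add_apply, Matrix.smul_apply, smul_eq_mul]
    ring
  -- pointwise bound
  have hpt : ∀ ω, frobSq (P ω * (P ω)ᵀ * ((1 - β₁) • Mt ω + β₁ • G ω - g))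
      ≤ (1 - β₁) * frobSq (Mt ω - g) + β₁ * frobSq (G ω - g) := by
    intro ω
    calc frobSq (P ω * (P ω)ᵀ * ((1 - β₁) • Mt ω + β₁ • G ω - g))
        ≤ frobSq ((1 - β₁) • Mt ω + β₁ • G ω - g) := proj_le _ (hPorth ω) _
      _ = frobSq ((1 - β₁) • (Mt ω - g) + β₁ • (G ω - g)) := by rw [hrw]
      _ ≤ (1 - β₁) * frobSq (Mt ω - g) + β₁ * frobSq (G ω - g) :=
          convex_bound β₁ (le_of_lt hβ₁pos) hβ₁le _ _
  -- integrability of the dominating function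
  have hDom : Integrable
      (fun ω => (1 - β₁) * frobSq (Mt ω - g) + β₁ * frobSq (G ω - g)) μ :=
    (hMint.const_mul _).add (hGint.const_mul _)
  have step1 : ∫ ω, frobSq (P ω * (P ω)ᵀ * ((1 - β₁) • Mt ω + β₁ • G ω - g)) ∂μ
      ≤ ∫ ω, ((1 - β₁) * frobSq (Mt ω - g) + β₁ * frobSq (G ω - g)) ∂μ := by
    apply integral_mono_of_nonneg
    · exact Filter.Eventually.of_forall fun ω => frobSq_nonneg _
    · exact hDom
    · exact Filter.Eventually.of_forall hpt
  have step2 : ∫ ω, ((1 - β₁) * frobSq (Mt ω - g) + β₁ * frobSq (G ω - g)) ∂μ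
      = (1 - β₁) * ∫ ω, frobSq (Mt ω - g) ∂μ + β₁ * ∫ ω, frobSq (G ω - g) ∂μ := by
    rw [integral_add (hMint.const_mul _) (hGint.const_mul _),
      integral_const_mul, integral_const_mul]
  -- the tower property: E[frobSq (G - g)] ≤ σ²
  have hvar : ∫ ω, frobSq (G ω - g) ∂μ ≤ σ ^ 2 :=
    tower_bound μ Mt hMmeas mM hmM _ hGint _ hcond_var
  have h1β : 0 ≤ 1 - β₁ := by linarith
  calc ∫ ω, frobSq (P ω * (P ω)ᵀ * ((1 - β₁) • Mt ω + β₁ • G ω - g)) ∂μ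
      ≤ (1 - β₁) * ∫ ω, frobSq (Mt ω - g) ∂μ + β₁ * ∫ ω, frobSq (G ω - g) ∂μ := by
        rw [← step2]; exact step1
    _ ≤ (1 - β₁) * ∫ ω, frobSq (Mt ω - g) ∂μ + β₁ * σ ^ 2 := by
        have := mul_le_mul_of_nonneg_left hvar (le_of_lt hβ₁pos)
        linarith
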